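/- Let (D,M) be a 3LQS-interpretation, D* ⊆ D, d* ∈ D*, V'₁ a set of sort-1 variables, and (D*,M*) = Rel(M, D*, d*, V'₁). Let (∀z₁)…(∀zₙ)φ₀ be a level-1 quantified atom, where φ₀ is a propositional combination of level-0 atoms, such that Mx ∈ D* for every sort-0 variable x occurring free in φ₀. If (D,M) ⊨ (∀z₁)…(∀zₙ)φ₀, then (D*,M*) ⊨ (∀z₁)…(∀zₙ)φ₀. -/

import Mathlib

open scoped symmDiff

/-- A 3LQS-interpretation over a (nonempty) domain `D`. -/
structure Interp (V0 V1 V2 D : Type) where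
  m0 : V0 → D
  m1 : V1 → Set D
  m2 : V2 → Set (Set D)

open Classical in
/-- The relativized interpretation `Rel(M, D*, d*, V'₁)`. -/
noncomputable def Interp.rel {V0 V1 V2 D : Type} (I : Interp V0 V1 V2 D)
    (Dstar : Set D) (dstar : D) (V1' : Set V1) : Interp V0 V1 V2 D where
  m0 := fun x => if I.m0 x ∈ Dstar then I.m0 x else dstar
  m1 := fun X => I.m1 X ∩ Dstar
  m2 := fun A =>
    ((I.m2 A ∩ {S | S ⊆ Dstar}) \ {S | ∃ X ∈ V1', I.m1 X ∩ Dstar = S}) ∪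
      {S | ∃ X ∈ V1', I.m1 X ∈ I.m2 A ∧ I.m1 X ∩ Dstar = S}

open Classical in
/-- Simultaneous update `M[v₁/w₁,…,vₙ/wₙ]` of an assignment. -/
noncomputable def updF {V D : Type} (M : V → D) {n : ℕ} (z : Fin n → V) (u : Fin n → D) :
    V → D :=
  fun x => if h : ∃ i, z i = x then u (Classical.choose h) else M x

/-- Propositional combinations of level-0 atoms (`x = y` and `x ∈ X`). -/
inductive F0 (V0 V1 : Type) : Type where
  | eq : V0 → V0 → F0 V0 V1
  | mem : V0 → V1 → F0 V0 V1
  | not : F0 V0 V1 → F0 V0 V1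
  | and : F0 V0 V1 → F0 V0 V1 → F0 V0 V1
  | or : F0 V0 V1 → F0 V0 V1 → F0 V0 V1

/-- Satisfaction of a propositional combination of level-0 atoms. -/
def sat0 {V0 V1 D : Type} (m0 : V0 → D) (m1 : V1 → Set D) : F0 V0 V1 → Prop
  | .eq x y => m0 x = m0 y
  | .mem x X => m0 x ∈ m1 X
  | .not φ => ¬ sat0 m0 m1 φ
  | .and φ ψ => sat0 m0 m1 φ ∧ sat0 m0 m1 ψ
  | .or φ ψ => sat0 m0 m1 φ ∨ sat0 m0 m1 ψ

/-- Sort-0 variables occurring in a level-0 formula. -/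
def F0.v0 {V0 V1 : Type} : F0 V0 V1 → Set V0
  | .eq x y => {x, y}
  | .mem x _ => {x}
  | .not φ => φ.v0
  | .and φ ψ => φ.v0 ∪ ψ.v0
  | .or φ ψ => φ.v0 ∪ ψ.v0

section Update

variable {V D : Type} {n : ℕ} (z : Fin n → V) (u : Fin n → D) {x : V}

lemma updF_of_notMem_range (M : V → D) (hx : x ∉ Set.range z) : updF M z u x = M x :=
  dif_neg fun ⟨i, hi⟩ => hx ⟨i, hi⟩

lemma updF_congr {M M' : V → D} (h : x ∉ Set.range z → M x = M' x) :
    updF M z u x = updF M' z u x := by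
  by_cases hx : x ∈ Set.range z
  · have hx' : ∃ i, z i = x := hx
    simp only [updF, dif_pos hx']
  · rw [updF_of_notMem_range z u M hx, updF_of_notMem_range z u M' hx, h hx]

lemma updF_mem {M : V → D} {S : Set D} (hM : x ∉ Set.range z → M x ∈ S)
    (hu : ∀ i, u i ∈ S) : updF M z u x ∈ S := by
  by_cases hx : x ∈ Set.range z
  · have hx' : ∃ i, z i = x := hx
    simp only [updF, dif_pos hx', hu]
  · exact updF_of_notMem_range z u M hx ▸ hM hx

end Update

lemma Interp.rel_m0_of_mem {V0 V1 V2 D : Type} {I : Interp V0 V1 V2 D} {Dstar : Set D}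
    (dstar : D) (V1' : Set V1) {x : V0} (hx : I.m0 x ∈ Dstar) :
    (I.rel Dstar dstar V1').m0 x = I.m0 x :=
  if_pos hx

section Sat0

variable {V0 V1 D : Type}

lemma sat0_congr {m0 m0' : V0 → D} (m1 : V1 → Set D) {φ : F0 V0 V1}
    (h : ∀ x ∈ φ.v0, m0' x = m0 x) : sat0 m0' m1 φ ↔ sat0 m0 m1 φ := by
  induction φ with
  | eq x y => simp only [sat0, h x (by simp [F0.v0]), h y (by simp [F0.v0])]
  | mem x X => simp only [sat0, h x (by simp [F0.v0])]
  | not φ ih => exact not_congr (ih h)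
  | and φ ψ ihφ ihψ =>
    exact and_congr (ihφ fun x hx => h x (Or.inl hx)) (ihψ fun x hx => h x (Or.inr hx))
  | or φ ψ ihφ ihψ =>
    exact or_congr (ihφ fun x hx => h x (Or.inl hx)) (ihψ fun x hx => h x (Or.inr hx))

lemma sat0_inter_iff {m0 : V0 → D} (m1 : V1 → Set D) {S : Set D} {φ : F0 V0 V1}
    (h : ∀ x ∈ φ.v0, m0 x ∈ S) : sat0 m0 (fun X => m1 X ∩ S) φ ↔ sat0 m0 m1 φ := by
  induction φ with
  | eq x y => rfl
  | mem x X => exact and_iff_left (h x (by simp [F0.v0]))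
  | not φ ih => exact not_congr (ih h)
  | and φ ψ ihφ ihψ =>
    exact and_congr (ihφ fun x hx => h x (Or.inl hx)) (ihψ fun x hx => h x (Or.inr hx))
  | or φ ψ ihφ ihψ =>
    exact or_congr (ihφ fun x hx => h x (Or.inl hx)) (ihψ fun x hx => h x (Or.inr hx))

end Sat0

theorem stmt5_general {V0 V1 V2 D : Type} (I : Interp V0 V1 V2 D)
    (Dstar : Set D) (dstar : D) (V1' : Set V1)
    {n : ℕ} (z : Fin n → V0) (φ0 : F0 V0 V1)
    (hfree : ∀ x ∈ φ0.v0, x ∉ Set.range z → I.m0 x ∈ Dstar)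
    (hsat : ∀ u : Fin n → D, sat0 (updF I.m0 z u) I.m1 φ0) :
    ∀ u : Fin n → D, (∀ i, u i ∈ Dstar) →
      sat0 (updF (I.rel Dstar dstar V1').m0 z u) (I.rel Dstar dstar V1').m1 φ0 := by
  intro u hu
  have hagree : ∀ x ∈ φ0.v0, updF (I.rel Dstar dstar V1').m0 z u x = updF I.m0 z u x :=
    fun x hx => updF_congr z u fun hz => Interp.rel_m0_of_mem dstar V1' (hfree x hx hz)
  have hmem : ∀ x ∈ φ0.v0, updF I.m0 z u x ∈ Dstar :=
    fun x hx => updF_mem z u (hfree x hx) hu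
  rw [sat0_congr _ hagree]
  exact (sat0_inter_iff I.m1 hmem).2 (hsat u)

/-- if `Mx ∈ D*` for every sort-0 variable occurring free in `φ₀` and
`(D,M) ⊨ (∀z₁)…(∀zₙ)φ₀`, then `(D*,M*) ⊨ (∀z₁)…(∀zₙ)φ₀` (where in `M*` the
quantified variables range over `D*`). -/
theorem stmt5 {V0 V1 V2 D : Type} [Nonempty D] (I : Interp V0 V1 V2 D)
    (Dstar : Set D) (dstar : D) (hds : dstar ∈ Dstar) (V1' : Set V1)
    {n : ℕ} (z : Fin n → V0) (φ0 : F0 V0 V1)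
    (hfree : ∀ x ∈ φ0.v0, x ∉ Set.range z → I.m0 x ∈ Dstar)
    (hsat : ∀ u : Fin n → D, sat0 (updF I.m0 z u) I.m1 φ0) :
    ∀ u : Fin n → D, (∀ i, u i ∈ Dstar) →
      sat0 (updF (I.rel Dstar dstar V1').m0 z u) (I.rel Dstar dstar V1').m1 φ0 :=
  stmt5_general I Dstar dstar V1' z φ0 hfree hsat
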